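/- For every natural number n, G_n ≤ G_{n+1}. -/

import Mathlib

universe u

/-- Combinatorial games over a poset `A` of atoms: either an atomic game `[a]` for an atom
`a : A`, or a composite game `⟨L|R⟩` where `L` and `R` are nonempty families of games
(the left and right options). -/
inductive PoGame (A : Type u) : Type (u + 1) where
  | atom : A → PoGame A
  | mk : (xl xr : Type u) → (xl → PoGame A) → (xr → PoGame A) →
      Nonempty xl → Nonempty xr → PoGame A

/-- Pre-games (Mathlib's former `SetTheory.PGame`, removed from Mathlib): a pre-game is
given by a type of left moves, a type of right moves, and the resulting pre-games. -/
inductive SetTheory.PGame : Type (u + 1)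
  | mk : ∀ α β : Type u, (α → SetTheory.PGame) → (β → SetTheory.PGame) → SetTheory.PGame

/-- The pre-game `0 = { | }`, as in Mathlib's former `SetTheory.PGame`. -/
instance SetTheory.PGame.instZero : Zero SetTheory.PGame :=
  ⟨⟨PEmpty, PEmpty, PEmpty.elim, PEmpty.elim⟩⟩

namespace PoGame

variable {A : Type u}

/-- `G` is an atomic game. -/
def IsAtomic : PoGame A → Prop
  | atom _ => True
  | mk _ _ _ _ _ _ => False

/-- `G` is a left option of the game given as second argument. -/
def IsLeftOption (G : PoGame A) : PoGame A → Prop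
  | atom _ => False
  | mk _ _ L _ _ _ => ∃ i, L i = G

/-- `G` is a right option of the game given as second argument. -/
def IsRightOption (G : PoGame A) : PoGame A → Prop
  | atom _ => False
  | mk _ _ _ R _ _ => ∃ j, R j = G

section Order

variable [PartialOrder A]

mutual
  /-- `Le G H` is the relation `G ≤ H` on games over the poset `A`, defined by mutual
  recursion with `Lf` (the relation `G ⊲ H`): `G ≤ H` iff every left option `G^L`
  satisfies `G^L ⊲ H`, every right option `H^R` satisfies `G ⊲ H^R`, and if `G` or `H`
  is atomic then `G ⊲ H`. -/
  inductive Le : PoGame A → PoGame A → Prop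
    | intro (G H : PoGame A)
        (hL : ∀ G', IsLeftOption G' G → Lf G' H)
        (hR : ∀ H', IsRightOption H' H → Lf G H')
        (hA : IsAtomic G ∨ IsAtomic H → Lf G H) : Le G H

  /-- `Lf G H` is the relation `G ⊲ H` on games over the poset `A`: it holds iff some
  right option `G^R` satisfies `G^R ≤ H`, or some left option `H^L` satisfies `G ≤ H^L`,
  or `G = [a]` and `H = [b]` are atomic with `a ≤ b` in `A`. -/
  inductive Lf : PoGame A → PoGame A → Prop
    | rightOption (G H G' : PoGame A) (h : IsRightOption G' G) (hle : Le G' H) : Lf G H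
    | leftOption (G H H' : PoGame A) (h : IsLeftOption H' H) (hle : Le G H') : Lf G H
    | atom (a b : A) (hab : a ≤ b) : Lf (atom a) (atom b)
end

/-- Two games are equivalent if `G ≤ H` and `H ≤ G`. -/
def GEquiv (G H : PoGame A) : Prop := Le G H ∧ Le H G

/-- `G` is locally monotone if `G ≤ G^L` for every left option `G^L` and `G^R ≤ G` for
every right option `G^R`. -/
def LocallyMonotone (G : PoGame A) : Prop :=
  (∀ G', IsLeftOption G' G → Le G G') ∧ (∀ G', IsRightOption G' G → Le G' G)

/-- `G` is an option (left or right) of `H`. -/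
def IsOption (G H : PoGame A) : Prop := IsLeftOption G H ∨ IsRightOption G H

/-- `G` is a position of `H`: `H` itself, an option of `H`, an option of an option, etc. -/
def IsPosition (G H : PoGame A) : Prop := Relation.ReflTransGen IsOption G H

/-- `G` is monotone if every position of `G` is locally monotone. -/
def Monotone (G : PoGame A) : Prop := ∀ K, IsPosition K G → LocallyMonotone K

end Order

/-- The 5-element linearly ordered set `L5 = {-3, -2, -1, 0, 1}`. -/
abbrev L5 : Type := {a : ℤ // -3 ≤ a ∧ a ≤ 1}

/-- `G` has mean `C`: an atomic game `[a]` has mean `a`, and a composite game has mean `C`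
iff every left option has mean `C + 1` and every right option has mean `C - 1`. -/
def HasMean : PoGame L5 → ℤ → Prop
  | atom a, C => (a : ℤ) = C
  | mk _ _ L R _ _, C => (∀ i, HasMean (L i) (C + 1)) ∧ (∀ j, HasMean (R j) (C - 1))

/-- The game `⟨G | H⟩` with a single left option `G` and a single right option `H`. -/
def ofPair (G H : PoGame A) : PoGame A :=
  mk PUnit PUnit (fun _ => G) (fun _ => H) ⟨PUnit.unit⟩ ⟨PUnit.unit⟩

/-- `⋆ = ⟨-1 | -3⟩`. -/
def star : PoGame L5 := ofPair (atom ⟨-1, by norm_num⟩) (atom ⟨-3, by norm_num⟩)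

/-- `M(G) = ⟨1 | G⟩`. -/
def M (G : PoGame L5) : PoGame L5 := ofPair (atom ⟨1, by norm_num⟩) G

/-- `P(G) = ⟨G | -2⟩`. -/
def P (G : PoGame L5) : PoGame L5 := ofPair G (atom ⟨-2, by norm_num⟩)

/-- `P⋆(G) = ⟨G | ⋆⟩`. -/
def Pstar (G : PoGame L5) : PoGame L5 := ofPair G star

/-- `Pn n G = P G` if `n` is odd, `P⋆ G` if `n` is even. -/
def Pn (n : ℕ) (G : PoGame L5) : PoGame L5 := if Odd n then P G else Pstar G

/-- The sequence `G_0 = [0]`, `G_{n+1} = M (Pn n (G_n))`. -/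
def Gseq : ℕ → PoGame L5
  | 0 => atom ⟨0, by norm_num⟩
  | n + 1 => M (Pn n (Gseq n))

/-- The normal-play game obtained from a game over `L5` by replacing every atom by the
normal-play game `0 = { | }`, keeping the tree of left and right options. -/
def np : PoGame L5 → SetTheory.PGame.{0}
  | atom _ => 0
  | mk xl xr L R _ _ => SetTheory.PGame.mk xl xr (fun i => np (L i)) (fun j => np (R j))

end PoGame


/-! Right's only move in `G_{n+1} = ⟨1 | Pn(G_n)⟩` leads to a game having `G_n` as a left option,
so Left answers it by moving back to `G_n`. What remains of `G_n ≤ G_{n+1}` is to check that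
`G_n` itself (if it is the atom `0`) or its left option (the atom `1`) is dominated by the left
option `1` of `G_{n+1}`. -/

namespace PoGame

variable {A : Type*} [PartialOrder A]

theorem atom_le_atom {a b : A} (h : a ≤ b) : Le (atom a) (atom b) :=
  .intro _ _ (fun _ h => h.elim) (fun _ h => h.elim) (fun _ => .atom a b h)

theorem Le.refl (G : PoGame A) : Le G G := by
  induction G with
  | atom a => exact atom_le_atom le_rfl
  | mk xl xr L R _ _ ihL ihR =>
    refine .intro _ _ ?_ ?_ fun h => h.elim False.elim False.elim
    · rintro _ ⟨i, rfl⟩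
      exact .leftOption _ _ _ ⟨i, rfl⟩ (ihL i)
    · rintro _ ⟨j, rfl⟩
      exact .rightOption _ _ _ ⟨j, rfl⟩ (ihR j)

theorem lf_ofPair_of_le {G X : PoGame A} (h : Le G X) (Y : PoGame A) : Lf G (ofPair X Y) :=
  .leftOption _ _ _ ⟨PUnit.unit, rfl⟩ h

theorem le_ofPair_of_lf {G X Y : PoGame A} (hL : ∀ G', IsLeftOption G' G → Lf G' (ofPair X Y))
    (hR : Lf G Y) (hA : IsAtomic G → Lf G (ofPair X Y)) : Le G (ofPair X Y) :=
  .intro _ _ hL (fun _ ⟨_, h⟩ => h ▸ hR) fun h => h.elim hA False.elim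

theorem lf_Pn_self (n : ℕ) (G : PoGame L5) : Lf G (Pn n G) := by
  unfold Pn P Pstar
  split <;> exact lf_ofPair_of_le (.refl G) _

end PoGame

open PoGame in
/-- For every natural number `n`, `G_n ≤ G_{n+1}`. -/
theorem stmt_4 (n : ℕ) : Le (Gseq n) (Gseq (n + 1)) := by
  cases n with
  | zero =>
    exact le_ofPair_of_lf (fun _ h => h.elim) (lf_Pn_self 0 _)
      fun _ => lf_ofPair_of_le (atom_le_atom (by decide)) _
  | succ n =>
    refine le_ofPair_of_lf ?_ (lf_Pn_self (n + 1) _) False.elim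
    rintro _ ⟨_, rfl⟩
    exact lf_ofPair_of_le (.refl _) _
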